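/- arXiv:2301.08389 — 3 statements merged into one kernel-verified Lean document; each statement's English description precedes it below -/
import Mathlib

section
/- For integers n ≥ 1 and 0 ≤ k ≤ n, and an indeterminate t, the identity (n!/(n−k)!) · Σ_{l=0}^{n−k} (−1)^{n−k−l} binom(n−k,l) binom(l+t,n) = binom(n,k) · t(t−1)···(t−(k−1)) holds as an identity of polynomials in t. -/
/-!
The alternating sum is the `(n - k)`-th forward difference at `l = 0` of
`l ↦ binom(l + t, n) · n!`, i.e. of the falling factorial `(t + l)_n`. In `l`, the forward
difference acts on falling factorials like a derivative, `Δ (t + l)_(j+1) = (j + 1) (t + l)_j`,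
so `n - k` differences turn `(t + l)_n` into `n!/k! · (t + l)_k`, and the prefactor
`n!/(n - k)!` together with the `1/n!` inside the sum gives `binom(n, k)`.
-/

open Polynomial Finset fwdDiff

section

variable (R : Type*) [CommRing R]

theorem descPochhammer_succ_comp_X_add_one (n : ℕ) :
    (descPochhammer R (n + 1)).comp (X + 1) =
      descPochhammer R (n + 1) + (n + 1 : ℕ) • descPochhammer R n := by
  have h := congrArg (·.comp (X + 1)) (descPochhammer_succ_comp_X_sub_one R n)
  simp only [sub_comp, comp_assoc, X_comp, one_comp, add_sub_cancel_right, comp_X, smul_eq_mul,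
    mul_comp, add_comp, natCast_comp] at h
  rw [nsmul_eq_mul, Nat.cast_succ]
  linear_combination -h

theorem fwdDiff_descPochhammer_comp_X_add_C (n : ℕ) :
    Δ_[1] (fun l : ℕ ↦ (descPochhammer R (n + 1)).comp (X + C (l : R))) =
      (n + 1) • fun l : ℕ ↦ (descPochhammer R n).comp (X + C (l : R)) := by
  ext1 l
  have hshift : X + C ((l + 1 : ℕ) : R) = (X + 1).comp (X + C (l : R)) := by
    simp only [add_comp, X_comp, one_comp, Nat.cast_succ, C_add, C_1]; ring
  rw [fwdDiff, Pi.smul_apply, hshift, ← comp_assoc, descPochhammer_succ_comp_X_add_one, add_comp,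
    smul_comp, add_sub_cancel_left]

theorem fwdDiff_iter_descPochhammer_comp_X_add_C (m j : ℕ) :
    (Δ_[1])^[m] (fun l : ℕ ↦ (descPochhammer R (m + j)).comp (X + C (l : R))) =
      (m + j).descFactorial m • fun l : ℕ ↦ (descPochhammer R j).comp (X + C (l : R)) := by
  induction m with
  | zero => simp
  | succ m ih =>
    rw [Function.iterate_succ_apply, add_right_comm, fwdDiff_descPochhammer_comp_X_add_C,
      fwdDiff_iter_const_smul, ih, smul_smul, Nat.succ_descFactorial_succ]

theorem sum_alternating_choose_smul_descPochhammer_comp_X_add_C (m j : ℕ) :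
    ∑ l ∈ range (m + 1), ((-1 : ℤ) ^ (m - l) * m.choose l) •
        (descPochhammer R (m + j)).comp (X + C (l : R)) =
      (m + j).descFactorial m • descPochhammer R j := by
  have h := congrFun (fwdDiff_iter_descPochhammer_comp_X_add_C R m j) 0
  rw [fwdDiff_iter_eq_sum_shift] at h
  simpa using h

end

theorem stmt3_general (n k : ℕ) (hk : k ≤ n) :
    Polynomial.C ((n.factorial : ℚ) / ((n - k).factorial : ℚ)) *
      ∑ l ∈ Finset.range (n - k + 1),
        Polynomial.C ((-1 : ℚ) ^ (n - k - l) * ((n - k).choose l : ℚ) / (n.factorial : ℚ)) *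
          (descPochhammer ℚ n).comp (Polynomial.X + Polynomial.C (l : ℚ))
    = Polynomial.C (n.choose k : ℚ) * descPochhammer ℚ k := by
  obtain ⟨m, rfl⟩ := Nat.exists_eq_add_of_le' hk
  have hsum := sum_alternating_choose_smul_descPochhammer_comp_X_add_C ℚ m k
  have hterm : ∀ l ∈ range (m + 1),
      C ((-1 : ℚ) ^ (m - l) * (m.choose l : ℚ) / ((m + k).factorial : ℚ)) *
          (descPochhammer ℚ (m + k)).comp (X + C (l : ℚ)) =
        C ((m + k).factorial : ℚ)⁻¹ *
          (((-1 : ℤ) ^ (m - l) * m.choose l) • (descPochhammer ℚ (m + k)).comp (X + C (l : ℚ))) := by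
    intro l _
    rw [zsmul_eq_mul, div_eq_mul_inv]
    push_cast
    simp only [map_mul, map_pow, map_neg, map_one, map_natCast]
    ring
  rw [Nat.add_sub_cancel, sum_congr rfl hterm, ← mul_sum, hsum, nsmul_eq_mul, ← mul_assoc,
    ← mul_assoc]
  congr 1
  rw [← C_eq_natCast, ← C_mul, ← C_mul]
  congr 1
  rw [Nat.descFactorial_eq_factorial_mul_choose, Nat.choose_symm_add]
  push_cast
  field_simp

/-- `(n!/(n−k)!) Σ_{l=0}^{n−k} (−1)^{n−k−l} C(n−k,l) binom(l+t,n) = C(n,k) t(t−1)⋯(t−k+1)`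
as polynomials in `t` over `ℚ`; `binom(l+t,n)` is `descPochhammer` composed with `X + l`,
divided by `n!`. -/
theorem stmt3 (n k : ℕ) (hn : 1 ≤ n) (hk : k ≤ n) :
    Polynomial.C ((n.factorial : ℚ) / ((n - k).factorial : ℚ)) *
      ∑ l ∈ Finset.range (n - k + 1),
        Polynomial.C ((-1 : ℚ) ^ (n - k - l) * ((n - k).choose l : ℚ) / (n.factorial : ℚ)) *
          (descPochhammer ℚ n).comp (Polynomial.X + Polynomial.C (l : ℚ))
    = Polynomial.C (n.choose k : ℚ) * descPochhammer ℚ k :=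
  stmt3_general n k hk
end

section
/- Let H_{m,l} be the family of polynomials in a variable X defined by H_{0,l} = δ_{0,l} and H_{m,l} = H_{m−1,l} + n(1 + (−1)^n X/n^n)(X d/dX + (m−l)/n) H_{m−1,l−1} for m ≥ 1, with H_{m,l} = 0 outside 0 ≤ l ≤ m. Then modulo the ideal generated by X·(1 + (−1)^n X/n^n) in ℂ[X], H_{m,l} ≡ S(m, m−l) · Y^l, where Y = 1 + (−1)^n X/n^n and S denotes Stirling numbers of the second kind. -/
/-!
Modulo `(X Y)` the derivative term `n Y X H'` of the recurrence vanishes, whatever `H'` is, so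
the images `h m l` of `H m l` satisfy `h (m+1) (l+1) = h m (l+1) + (m - l) Y h m l`. With
`k = m - l` this is the recurrence `S(m+1, k+1) = (k+1) S(m, k+1) + S(m, k)` for the
coefficient of `Y ^ l`.
-/

open Polynomial

/-- Stirling numbers of the second kind. -/
def stirling2 : ℕ → ℕ → ℕ
  | 0, 0 => 1
  | 0, _ + 1 => 0
  | _ + 1, 0 => 0
  | m + 1, k + 1 => (k + 1) * stirling2 m (k + 1) + stirling2 m k

theorem stirling2_eq_stirlingSecond : stirling2 = Nat.stirlingSecond := by
  funext m k
  induction m generalizing k with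
  | zero => cases k <;> rfl
  | succ m ih =>
    cases k with
    | zero => rfl
    | succ k => simp only [stirling2, Nat.stirlingSecond_succ_succ, ih]

theorem eq_stirlingSecond_mul_pow {R : Type*} [CommSemiring R] (y : R) (h : ℕ → ℕ → R)
    (h00 : h 0 0 = 1) (h0 : ∀ m, h (m + 1) 0 = h m 0) (hvanish : ∀ m l, m < l → h m l = 0)
    (hrec : ∀ m l, l ≤ m → h (m + 1) (l + 1) = h m (l + 1) + (m - l : ℕ) * y * h m l) :
    ∀ m l, l ≤ m → h m l = Nat.stirlingSecond m (m - l) * y ^ l := by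
  intro m
  induction m with
  | zero =>
    intro l hl
    obtain rfl : l = 0 := Nat.le_zero.mp hl
    simp [h00]
  | succ m ih =>
    rintro (_ | l) hl
    · simp [h0, ih 0 m.zero_le, Nat.stirlingSecond_self]
    · rw [hrec m l (by omega), ih l (by omega)]
      rcases (Nat.lt_succ_iff.mp hl).lt_or_eq with hlm | rfl
      · obtain ⟨k, hk⟩ : ∃ k, m - l = k + 1 := ⟨m - l - 1, by omega⟩
        rw [ih (l + 1) hlm, show m + 1 - (l + 1) = k + 1 by omega,
          show m - (l + 1) = k by omega, hk, Nat.stirlingSecond_succ_succ]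
        push_cast
        ring
      · simp [hvanish]

theorem stmt12_general (n : ℕ) (hn : 2 ≤ n) (H : ℕ → ℕ → Polynomial ℂ) (Y : Polynomial ℂ)
    (hH00 : H 0 0 = 1)
    (hH0 : ∀ m, H (m + 1) 0 = H m 0)
    (hvanish : ∀ m l, m < l → H m l = 0)
    (hrec : ∀ m l, H (m + 1) (l + 1) =
        H m (l + 1) + Polynomial.C (n : ℂ) * Y *
          (Polynomial.X * Polynomial.derivative (H m l) +
            Polynomial.C ((((m : ℂ) + 1) - ((l : ℂ) + 1)) / (n : ℂ)) * H m l)) :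
    ∀ m l, l ≤ m →
      H m l - Polynomial.C (stirling2 m (m - l) : ℂ) * Y ^ l ∈
        Ideal.span {Polynomial.X * Y} := by
  have hn0 : (n : ℂ) ≠ 0 := Nat.cast_ne_zero.mpr (by omega)
  set π := Ideal.Quotient.mk (Ideal.span {X * Y})
  have hXY : π X * π Y = 0 := by
    rw [← map_mul, Ideal.Quotient.eq_zero_iff_mem]
    exact Ideal.mem_span_singleton_self _
  have hcoef : ∀ m l : ℕ, l ≤ m →
      C (n : ℂ) * C ((((m : ℂ) + 1) - ((l : ℂ) + 1)) / (n : ℂ)) = ((m - l : ℕ) : ℂ[X]) := by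
    intro m l hl
    rw [← C_mul, mul_div_cancel₀ _ hn0, ← map_natCast C, Nat.cast_sub hl]
    congr 1
    ring
  intro m l hl
  rw [← Ideal.Quotient.eq, stirling2_eq_stirlingSecond, map_mul, map_pow, map_natCast]
  refine eq_stirlingSecond_mul_pow (π Y) (fun m l => π (H m l)) (by simp [hH00])
    (fun m => congrArg π (hH0 m)) (fun m l hml => by simp [hvanish m l hml]) ?_ m l hl
  intro m l hlm
  have hπ := congrArg π (hrec m l)
  rw [← map_natCast π, ← hcoef m l hlm]
  simp only [map_add, map_mul] at hπ ⊢
  linear_combination hπ + π (C (n : ℂ)) * π (derivative (H m l)) * hXY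

/-- The polynomials `H_{m,l}` defined by `H_{0,l} = δ_{0,l}` and
`H_{m,l} = H_{m−1,l} + n Y (X d/dX + (m−l)/n) H_{m−1,l−1}`, with `Y = 1+(−1)^n X/n^n`,
satisfy `H_{m,l} ≡ S(m,m−l) Y^l` modulo the ideal `(XY)` of `ℂ[X]`. -/
theorem stmt12 (n : ℕ) (hn : 2 ≤ n) (H : ℕ → ℕ → Polynomial ℂ) (Y : Polynomial ℂ)
    (hY : Y = 1 + Polynomial.C ((-1 : ℂ) ^ n * ((n : ℂ) ^ n)⁻¹) * Polynomial.X)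
    (hH00 : H 0 0 = 1)
    (hH0 : ∀ m, H (m + 1) 0 = H m 0)
    (hvanish : ∀ m l, m < l → H m l = 0)
    (hrec : ∀ m l, H (m + 1) (l + 1) =
        H m (l + 1) + Polynomial.C (n : ℂ) * Y *
          (Polynomial.X * Polynomial.derivative (H m l) +
            Polynomial.C ((((m : ℂ) + 1) - ((l : ℂ) + 1)) / (n : ℂ)) * H m l)) :
    ∀ m l, l ≤ m →
      H m l - Polynomial.C (stirling2 m (m - l) : ℂ) * Y ^ l ∈
        Ideal.span {Polynomial.X * Y} :=
  stmt12_general n hn H Y hH00 hH0 hvanish hrec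
end

section
/- Let 𝔍 ⊂ ℂ[X] be the ideal generated by XY where Y = 1 + (−1)^n X/n^n, and let D be a derivation on a ℂ[X]-algebra containing an element L_j with L_j^n = X, D L_j = L_j Y, and DY ≡ 0 mod 𝔍. Then for all integers k ≥ 1 and r ≥ 0: the operator (D)(D−Y)(D−2Y)···(D−(k−1)Y) applied to L_j^r is congruent mod 𝔍 to 0 if 0 ≤ r ≤ k−1, and to r(r−1)···(r−(k−1))·L_j^r Y^k if r ≥ k. -/
/-- The operator `D(D−Y)(D−2Y)⋯(D−(k−1)Y)`: `phiOp d Y k` applies the factors with the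
largest shift first. -/
def phiOp {A : Type*} [CommRing A] (d : A → A) (Y : A) : ℕ → A → A
  | 0 => id
  | k + 1 => fun a => phiOp d Y k (d a - k • (Y * a))

/-- In a `ℂ[X]`-algebra with a derivation `d`, `Y = 1 + (−1)^n X/n^n`, an element `L_j`
with `L_j^n = X`, `d L_j = L_j Y`, and `d Y ∈ (XY)`, the operator
`D(D−Y)⋯(D−(k−1)Y)` sends `L_j^r` into the ideal `(XY)` for `r ≤ k−1`, and to
`r(r−1)⋯(r−k+1) L_j^r Y^k` modulo `(XY)` for `r ≥ k`. -/
theorem stmt19 {A : Type*} [CommRing A] [Algebra (Polynomial ℂ) A] (n : ℕ) (hn : 2 ≤ n)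
    (d : A → A)
    (hd_add : ∀ a b, d (a + b) = d a + d b)
    (hd_mul : ∀ a b, d (a * b) = d a * b + a * d b)
    (Y X Lj : A)
    (hX : X = algebraMap (Polynomial ℂ) A Polynomial.X)
    (hY : Y = algebraMap (Polynomial ℂ) A
        (1 + Polynomial.C ((-1 : ℂ) ^ n * ((n : ℂ) ^ n)⁻¹) * Polynomial.X))
    (hLn : Lj ^ n = X) (hDL : d Lj = Lj * Y)
    (hDY : d Y ∈ Ideal.span {X * Y}) :
    ∀ k, 1 ≤ k → ∀ r : ℕ,
      (r ≤ k - 1 → phiOp d Y k (Lj ^ r) ∈ Ideal.span {X * Y}) ∧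
      (k ≤ r → phiOp d Y k (Lj ^ r) -
          (∏ i ∈ Finset.range k, ((r : A) - (i : A))) * (Lj ^ r * Y ^ k) ∈
        Ideal.span {X * Y}) := by
  set J := Ideal.span {X * Y} with hJ
  -- basic facts about d
  have hd0 : d 0 = 0 := by
    have h := hd_add 0 0
    rw [add_zero] at h
    exact right_eq_add.mp h
  have hd1 : d 1 = 0 := by
    have h := hd_mul 1 1
    rw [mul_one, mul_one, one_mul] at h
    exact right_eq_add.mp h
  have hdneg : ∀ a, d (-a) = - d a := by
    intro a
    have h := hd_add a (-a)
    rw [add_neg_cancel, hd0] at h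
    exact eq_neg_of_add_eq_zero_right h.symm
  have hdsub : ∀ a b, d (a - b) = d a - d b := by
    intro a b
    rw [sub_eq_add_neg, hd_add, hdneg, sub_eq_add_neg]
  have hdpowL : ∀ r : ℕ, d (Lj ^ r) = (r : A) * (Lj ^ r * Y) := by
    intro r
    induction r with
    | zero => simp [hd1]
    | succ r ih =>
      rw [pow_succ, hd_mul, ih, hDL]
      push_cast
      ring
  have hdYpow : ∀ m : ℕ, d (Y ^ m) ∈ J := by
    intro m
    induction m with
    | zero => simp [hd1]
    | succ m ih =>
      rw [pow_succ, hd_mul]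
      exact J.add_mem (Ideal.mul_mem_right _ _ ih) (Ideal.mul_mem_left _ _ hDY)
  have hdX : d X ∈ J := by
    rw [← hLn, hdpowL, hLn]
    exact Ideal.mul_mem_left _ _ (Ideal.subset_span rfl)
  have hdXY : d (X * Y) ∈ J := by
    rw [hd_mul]
    exact J.add_mem (Ideal.mul_mem_right _ _ hdX) (Ideal.mul_mem_left _ _ hDY)
  have hdJ : ∀ a ∈ J, d a ∈ J := by
    intro a ha
    rw [hJ, Ideal.mem_span_singleton] at ha
    obtain ⟨c, rfl⟩ := ha
    rw [hd_mul]
    exact J.add_mem (Ideal.mul_mem_right _ _ hdXY)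
      (Ideal.mul_mem_right _ _ (Ideal.subset_span rfl))
  -- lemmas about phiOp
  have phi_mem : ∀ k a, a ∈ J → phiOp d Y k a ∈ J := by
    intro k
    induction k with
    | zero => intro a ha; exact ha
    | succ k ih =>
      intro a ha
      simp only [phiOp]
      apply ih
      exact J.sub_mem (hdJ a ha) (by
        rw [nsmul_eq_mul]
        exact Ideal.mul_mem_left _ _ (Ideal.mul_mem_left _ _ ha))
  have phi_sub : ∀ k a b, phiOp d Y k (a - b) = phiOp d Y k a - phiOp d Y k b := by
    intro k
    induction k with
    | zero => intro a b; rfl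
    | succ k ih =>
      intro a b
      simp only [phiOp]
      rw [← ih]
      congr 1
      rw [hdsub]
      simp only [nsmul_eq_mul]
      ring
  have phi_const : ∀ k (c a : A), d c = 0 →
      phiOp d Y k (c * a) = c * phiOp d Y k a := by
    intro k
    induction k with
    | zero => intro c a _; rfl
    | succ k ih =>
      intro c a hc
      simp only [phiOp]
      rw [← ih _ _ hc]
      congr 1
      rw [hd_mul, hc]
      simp only [nsmul_eq_mul]
      ring
  have hdnat : ∀ m : ℕ, d (m : A) = 0 := by
    intro m
    induction m with
    | zero => simpa using hd0
    | succ m ih => push_cast; rw [hd_add, ih, hd1, add_zero]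
  -- key computation
  have key : ∀ k r m : ℕ,
      phiOp d Y k (Lj ^ r * Y ^ m) -
        (∏ i ∈ Finset.range k, ((r : A) - (i : A))) * (Lj ^ r * Y ^ (m + k)) ∈ J := by
    intro k
    induction k with
    | zero => intro r m; simp [phiOp]
    | succ k ih =>
      intro r m
      simp only [phiOp]
      have hceq : d ((r : A) - (k : A)) = 0 := by
        rw [hdsub, hdnat, hdnat, sub_zero]
      have h1 : d (Lj ^ r * Y ^ m) - k • (Y * (Lj ^ r * Y ^ m)) -
          ((r : A) - (k : A)) * (Lj ^ r * Y ^ (m + 1)) = Lj ^ r * d (Y ^ m) := by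
        rw [hd_mul, hdpowL]
        simp only [nsmul_eq_mul, pow_succ]
        ring
      have h2 : phiOp d Y k (d (Lj ^ r * Y ^ m) - k • (Y * (Lj ^ r * Y ^ m))) -
          ((r : A) - (k : A)) * phiOp d Y k (Lj ^ r * Y ^ (m + 1)) ∈ J := by
        rw [← phi_const _ _ _ hceq, ← phi_sub, h1]
        exact phi_mem _ _ (Ideal.mul_mem_left _ _ (hdYpow m))
      have h3 := Ideal.mul_mem_left _ ((r : A) - (k : A)) (ih r (m + 1))
      have h4 := J.add_mem h2 h3
      have heq : phiOp d Y k (d (Lj ^ r * Y ^ m) - k • (Y * (Lj ^ r * Y ^ m))) -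
          (∏ i ∈ Finset.range (k + 1), ((r : A) - (i : A))) * (Lj ^ r * Y ^ (m + (k + 1)))
          = (phiOp d Y k (d (Lj ^ r * Y ^ m) - k • (Y * (Lj ^ r * Y ^ m))) -
              ((r : A) - (k : A)) * phiOp d Y k (Lj ^ r * Y ^ (m + 1))) +
            ((r : A) - (k : A)) * (phiOp d Y k (Lj ^ r * Y ^ (m + 1)) -
              (∏ i ∈ Finset.range k, ((r : A) - (i : A))) * (Lj ^ r * Y ^ (m + 1 + k))) := by
        rw [Finset.prod_range_succ, show m + 1 + k = m + (k + 1) from by ring]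
        ring
      rw [heq]
      exact h4
  intro k hk r
  constructor
  · intro hr
    have h := key k r 0
    have hrk : r < k := lt_of_le_of_lt hr (Nat.sub_lt (lt_of_lt_of_le Nat.zero_lt_one hk) Nat.one_pos)
    have hP : (∏ i ∈ Finset.range k, ((r : A) - (i : A))) = 0 :=
      Finset.prod_eq_zero (Finset.mem_range.mpr hrk) (sub_self _)
    rw [hP] at h
    simpa using h
  · intro _
    have h := key k r 0
    simpa using h
end
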